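/- Let n ≥ 1 be an integer, θ ∈ (0,1), c ≥ 1 an integer, and let 𝒮 = (S_1, …, S_ℓ) be a finite list of ℓ ≥ 1 nonempty subsets of {1,…,n}. For 1 ≤ i ≤ n define W_i(p,𝒮) = (1/ℓ)·Σ_{j : i∈S_j} θ c (1 − p(S_j))^{c−1} / (1 − θ(1 − p(S_j))^c)^2. Let p be a schedule with p_i > 0 for every i and Σ_{z=1}^n p_z W_z(p,𝒮) > 0. If p_i W_i(p,𝒮) / (Σ_{z=1}^n p_z W_z(p,𝒮)) = p_i for every i, then p minimizes the sample cost: cost_θ(p,𝒮) ≤ cost_θ(q,𝒮) for every schedule q. -/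

import Mathlib

/-!
With `φ(a) = 1 / (1 - θ a^c)`, the cost of a schedule is the average of `φ(1 - p(S))` over the
sample, and `φ` lies above its tangents on `[0, 1]`; hence `cost q` is at least `cost p` plus a
linear term whose coefficients are the `W_i(p)`. At a fixed point of the update with all `p_i > 0`
every `W_i(p)` equals `Σ_z p_z W_z(p)`, so the linear term is a multiple of
`Σ_i (p_i - q_i) = 0`.
-/

open Finset

variable {𝕜 : Type*} [Field 𝕜] [LinearOrder 𝕜] [IsStrictOrderedRing 𝕜]

theorem one_div_one_sub_mul_pow_tangent_le {θ a b : 𝕜} (c : ℕ) (hθ : 0 ≤ θ)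
    (ha : 0 ≤ a) (hb : 0 ≤ b) (hA : 0 < 1 - θ * a ^ c) (hB : 0 < 1 - θ * b ^ c) :
    1 / (1 - θ * a ^ c) + θ * c * a ^ (c - 1) / (1 - θ * a ^ c) ^ 2 * (b - a)
      ≤ 1 / (1 - θ * b ^ c) := by
  set D := b ^ c - a ^ c
  set E := (c : 𝕜) * a ^ (c - 1) * (b - a)
  have hED : E ≤ D := by
    have := pow_add_mul_le_add_pow ha (show 0 ≤ 2 * a + (b - a) by linarith) c
    rw [add_sub_cancel] at this
    linarith
  have hkey : 0 ≤ (1 - θ * a ^ c) * D - (1 - θ * b ^ c) * E := by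
    have : (1 - θ * a ^ c) * D - (1 - θ * b ^ c) * E = (1 - θ * b ^ c) * (D - E) + θ * D ^ 2 := by
      ring
    rw [this]
    exact add_nonneg (mul_nonneg hB.le (sub_nonneg.mpr hED)) (mul_nonneg hθ (sq_nonneg D))
  have hdiff : 1 / (1 - θ * b ^ c)
      - (1 / (1 - θ * a ^ c) + θ * c * a ^ (c - 1) / (1 - θ * a ^ c) ^ 2 * (b - a))
      = θ * ((1 - θ * a ^ c) * D - (1 - θ * b ^ c) * E)
        / ((1 - θ * a ^ c) ^ 2 * (1 - θ * b ^ c)) := by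
    field_simp
    ring
  have : 0 ≤ θ * ((1 - θ * a ^ c) * D - (1 - θ * b ^ c) * E)
      / ((1 - θ * a ^ c) ^ 2 * (1 - θ * b ^ c)) := by positivity
  linarith

theorem List.sum_map_mul_sum_eq_sum_mul_sum_filter {R ι : Type*} [CommSemiring R] [Fintype ι]
    [DecidableEq ι] (l : List (Finset ι)) (g : Finset ι → R) (x : ι → R) :
    (l.map fun S => g S * ∑ i ∈ S, x i).sum
      = ∑ i, x i * ((l.filter fun S => i ∈ S).map g).sum := by
  induction l with
  | nil => simp
  | cons S l ih =>
    have hS : g S * ∑ i ∈ S, x i = ∑ i, x i * if i ∈ S then g S else 0 := by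
      simp only [mul_ite, mul_zero, sum_ite_mem, univ_inter, mul_sum, mul_comm]
    simp only [List.map_cons, List.sum_cons, List.filter_cons, ih, hS, ← sum_add_distrib]
    refine sum_congr rfl fun i _ => ?_
    by_cases hi : i ∈ S <;> simp [hi, mul_add]

theorem sum_mem_Icc_of_mem_stdSimplex {ι : Type*} [Fintype ι] {p : ι → 𝕜}
    (hp : p ∈ stdSimplex 𝕜 ι) (S : Finset ι) : ∑ i ∈ S, p i ∈ Set.Icc 0 1 :=
  ⟨sum_nonneg fun i _ => hp.1 i,
    hp.2 ▸ sum_le_sum_of_subset_of_nonneg (subset_univ S) fun i _ _ => hp.1 i⟩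

theorem sum_map_one_div_add_sum_mul_le {ι : Type*} [Fintype ι] [DecidableEq ι] {θ : 𝕜}
    (hθ : θ ∈ Set.Ioo 0 1) (c : ℕ) (l : List (Finset ι)) {p q : ι → 𝕜}
    (hp : p ∈ stdSimplex 𝕜 ι) (hq : q ∈ stdSimplex 𝕜 ι) :
    (l.map fun S => 1 / (1 - θ * (1 - ∑ i ∈ S, p i) ^ c)).sum
      + ∑ i, (p i - q i) * ((l.filter fun S => i ∈ S).map fun S =>
          θ * c * (1 - ∑ j ∈ S, p j) ^ (c - 1) / (1 - θ * (1 - ∑ j ∈ S, p j) ^ c) ^ 2).sum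
      ≤ (l.map fun S => 1 / (1 - θ * (1 - ∑ i ∈ S, q i) ^ c)).sum := by
  have hden : ∀ r ∈ stdSimplex 𝕜 ι, ∀ S : Finset ι,
      0 ≤ 1 - ∑ i ∈ S, r i ∧ 0 < 1 - θ * (1 - ∑ i ∈ S, r i) ^ c := fun r hr S => by
    obtain ⟨h0, h1⟩ := sum_mem_Icc_of_mem_stdSimplex hr S
    have : (1 - ∑ i ∈ S, r i) ^ c ≤ 1 := pow_le_one₀ (by linarith) (by linarith)
    exact ⟨by linarith, by nlinarith [hθ.1, hθ.2]⟩
  rw [← List.sum_map_mul_sum_eq_sum_mul_sum_filter, ← List.sum_map_add]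
  refine List.sum_le_sum fun S _ => ?_
  have := one_div_one_sub_mul_pow_tangent_le c hθ.1.le
    (hden p hp S).1 (hden q hq S).1 (hden p hp S).2 (hden q hq S).2
  simpa only [sum_sub_distrib, sub_sub_sub_cancel_left] using this

theorem stmt17_general (n : ℕ) (θ : ℝ) (hθ : θ ∈ Set.Ioo (0 : ℝ) 1)
    (c : ℕ) (𝒮 : List (Finset (Fin n)))
    (cost : (Fin n → ℝ) → ℝ)
    (hcost : ∀ p, cost p = (1 / (𝒮.length : ℝ)) *
        (𝒮.map (fun S => 1 / (1 - θ * (1 - ∑ i ∈ S, p i) ^ c))).sum)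
    (W : (Fin n → ℝ) → Fin n → ℝ)
    (hW : ∀ p i, W p i = (1 / (𝒮.length : ℝ)) *
        ((𝒮.filter (fun S => i ∈ S)).map (fun S =>
          θ * c * (1 - ∑ j ∈ S, p j) ^ (c - 1)
            / (1 - θ * (1 - ∑ j ∈ S, p j) ^ c) ^ 2)).sum)
    (p : Fin n → ℝ) (hp : p ∈ stdSimplex ℝ (Fin n))
    (hpos : ∀ i, 0 < p i) (hsum : 0 < ∑ z, p z * W p z)
    (hfix : ∀ i, p i * W p i / (∑ z, p z * W p z) = p i) :
    ∀ q ∈ stdSimplex ℝ (Fin n), cost p ≤ cost q := by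
  intro q hq
  set μ := ∑ z, p z * W p z
  have hW_const : ∀ i, W p i = μ := fun i =>
    mul_left_cancel₀ (hpos i).ne' ((div_eq_iff hsum.ne').mp (hfix i))
  have hlinear : ∑ i, (p i - q i) * W p i = 0 := by
    simp only [hW_const, ← sum_mul, sum_sub_distrib, hp.2, hq.2, sub_self, zero_mul]
  calc cost p = cost p + ∑ i, (p i - q i) * W p i := by rw [hlinear, add_zero]
    _ = 1 / 𝒮.length * ((𝒮.map fun S => 1 / (1 - θ * (1 - ∑ i ∈ S, p i) ^ c)).sum
          + ∑ i, (p i - q i) * ((𝒮.filter fun S => i ∈ S).map fun S =>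
            θ * c * (1 - ∑ j ∈ S, p j) ^ (c - 1)
              / (1 - θ * (1 - ∑ j ∈ S, p j) ^ c) ^ 2).sum) := by
      simp only [hcost, hW, mul_add, mul_sum, mul_left_comm]
    _ ≤ 1 / 𝒮.length * (𝒮.map fun S => 1 / (1 - θ * (1 - ∑ i ∈ S, q i) ^ c)).sum := by
      gcongr
      exact sum_map_one_div_add_sum_mul_le hθ c 𝒮 hp hq
    _ = cost q := (hcost q).symm

/-- For a sample `𝒮` of `ℓ ≥ 1` nonempty subsets of `{1,…,n}` and
`W_i(p,𝒮) = (1/ℓ)·Σ_{j : i∈S_j} θc(1 − p(S_j))^{c−1}/(1 − θ(1 − p(S_j))^c)²`,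
if `p` is a schedule with all entries positive, `Σ_z p_z W_z(p,𝒮) > 0`, and the
WIGGINS-APX update leaves `p` unchanged, then `p` minimizes the sample cost
`cost_θ(·,𝒮)` over the standard simplex. -/
theorem stmt17 (n : ℕ) (hn : 1 ≤ n) (θ : ℝ) (hθ : θ ∈ Set.Ioo (0 : ℝ) 1)
    (c : ℕ) (hc : 1 ≤ c) (𝒮 : List (Finset (Fin n)))
    (hlen : 1 ≤ 𝒮.length) (hne : ∀ S ∈ 𝒮, S.Nonempty)
    (cost : (Fin n → ℝ) → ℝ)
    (hcost : ∀ p, cost p = (1 / (𝒮.length : ℝ)) *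
        (𝒮.map (fun S => 1 / (1 - θ * (1 - ∑ i ∈ S, p i) ^ c))).sum)
    (W : (Fin n → ℝ) → Fin n → ℝ)
    (hW : ∀ p i, W p i = (1 / (𝒮.length : ℝ)) *
        ((𝒮.filter (fun S => i ∈ S)).map (fun S =>
          θ * c * (1 - ∑ j ∈ S, p j) ^ (c - 1)
            / (1 - θ * (1 - ∑ j ∈ S, p j) ^ c) ^ 2)).sum)
    (p : Fin n → ℝ) (hp : p ∈ stdSimplex ℝ (Fin n))
    (hpos : ∀ i, 0 < p i) (hsum : 0 < ∑ z, p z * W p z)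
    (hfix : ∀ i, p i * W p i / (∑ z, p z * W p z) = p i) :
    ∀ q ∈ stdSimplex ℝ (Fin n), cost p ≤ cost q :=
  stmt17_general n θ hθ c 𝒮 cost hcost W hW p hp hpos hsum hfix
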